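/- arXiv:2404.10151 — 2 statements merged into one kernel-verified Lean document; each statement's English description precedes it below -/
import Mathlib

section
/- Replay step lemma (inductive core of the replay correctness): Let S ⊆ {1, …, k} be parent-closed, and let x ∈ {1, …, k} with x ∉ S and p x ∈ S ∪ {0}. Then replayInsert (p x) x (build S) = build (S ∪ {x}). That is, inserting x by scanning right from its parent, skipping all elements with timestamp greater than x, and inserting before the first element with timestamp smaller than x (or at the end), produces exactly the list that the sequential construction over S ∪ {x} produces. -/
/-- Insert `x` immediately after the (first) occurrence of `a` in the list. -/
def insertAfter (a x : ℕ) : List ℕ → List ℕ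
  | [] => []
  | b :: t => if b = a then b :: x :: t else b :: insertAfter a x t

/-- The sequential construction: `L 0 = [0]`, `L (i+1) = insertAfter (p (i+1)) (i+1) (L i)`. -/
def buildL (p : ℕ → ℕ) : ℕ → List ℕ
  | 0 => [0]
  | i + 1 => insertAfter (p (i + 1)) (i + 1) (buildL p i)

/-- Insert `x` into a list by timestamp: skip all elements greater than `x`,
and insert `x` before the first element smaller (or equal), or at the end. -/
def insertByTS (x : ℕ) : List ℕ → List ℕ
  | [] => [x]
  | b :: t => if x < b then b :: insertByTS x t else x :: b :: t

/-- The timestamp-guided replay insertion: scan right from the occurrence of `a`,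
skip all elements with timestamp greater than `x`, and insert `x` before the
first element with smaller timestamp (or at the end). -/
def replayInsert (a x : ℕ) : List ℕ → List ℕ
  | [] => []
  | b :: t => if b = a then b :: insertByTS x t else b :: replayInsert a x t

/-- `buildSet p S` performs the insertion events of `S` in increasing order of
timestamp, starting from `[0]`. -/
def buildSet (p : ℕ → ℕ) (S : Finset ℕ) : List ℕ :=
  (S.sort (· ≤ ·)).foldl (fun M i => insertAfter (p i) i M) [0]

/-- `i` is an ancestor of `j` (equivalently `j` a descendant of `i`): iterating the
parent map `p` (extended by `p 0 = 0`) starting from `j` reaches `i`. -/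
def isAncestor (p : ℕ → ℕ) (i j : ℕ) : Prop :=
  ∃ n : ℕ, (fun m => if m = 0 then 0 else p m)^[n] j = i

/-!
Induct on `S` by adding its largest element `a`. If `a < x`, then `x` is the newest event and
every entry of `build S` (including the sentinel `0`) is older than `x`, so the scan from `p x`
stops at once and the replay is the plain `insertAfter` performed last by `build (S ∪ {x})`.
If `a > x`, the replay of `x` commutes with the insertion of `a` after its parent: the scan skips
`a` because `a > x`, and `p a ≠ x` because `S` is parent-closed and `x ∉ S ∪ {0}`. So the claim
for `S` follows from the one for `S \ {a}`.
-/

lemma mem_insertAfter {a x y : ℕ} {M : List ℕ} :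
    y ∈ insertAfter a x M ↔ y ∈ M ∨ (y = x ∧ a ∈ M) := by
  induction M with
  | nil => simp [insertAfter]
  | cons b t ih => by_cases hb : b = a <;> simp [insertAfter, hb, ih] <;> tauto

lemma insertByTS_eq_cons {x : ℕ} {t : List ℕ} (h : ∀ b ∈ t, b ≤ x) :
    insertByTS x t = x :: t := by
  cases t with
  | nil => rfl
  | cons b t => simp [insertByTS, (h b List.mem_cons_self).not_gt]

lemma replayInsert_eq_insertAfter {a x : ℕ} {M : List ℕ} (h : ∀ b ∈ M, b ≤ x) :
    replayInsert a x M = insertAfter a x M := by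
  induction M with
  | nil => rfl
  | cons b t ih =>
    have ht : ∀ c ∈ t, c ≤ x := fun c hc => h c (List.mem_cons_of_mem b hc)
    by_cases hb : b = a <;> simp [replayInsert, insertAfter, hb, insertByTS_eq_cons ht, ih ht]

lemma insertByTS_insertAfter_comm {c m x : ℕ} {t : List ℕ} (hxc : x ≠ c) (hxm : x < m) :
    insertByTS x (insertAfter c m t) = insertAfter c m (insertByTS x t) := by
  induction t with
  | nil => simp [insertAfter, insertByTS, hxc]
  | cons b t ih =>
    by_cases hb : b = c
    · subst hb
      by_cases hxb : x < b <;> simp [insertAfter, insertByTS, hxb, hxm, hxc]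
    · by_cases hxb : x < b <;> simp [insertAfter, insertByTS, hb, hxb, hxc, ih]

lemma replayInsert_insertAfter_comm {a c m x : ℕ} {M : List ℕ}
    (ham : a ≠ m) (hcx : c ≠ x) (hxm : x < m) :
    replayInsert a x (insertAfter c m M) = insertAfter c m (replayInsert a x M) := by
  induction M with
  | nil => rfl
  | cons b t ih =>
    by_cases hb : b = c
    · subst hb
      by_cases hba : b = a <;> simp [insertAfter, replayInsert, insertByTS, hba, hxm, Ne.symm ham]
    · by_cases hba : b = a
      · subst hba
        simp [insertAfter, replayInsert, hb, insertByTS_insertAfter_comm hcx.symm hxm]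
      · simp [insertAfter, replayInsert, hb, hba, ih]

lemma Finset.sort_insert_of_forall_lt {α : Type*} [LinearOrder α] {s : Finset α} {a : α}
    (h : ∀ b ∈ s, b < a) :
    (insert a s).sort (· ≤ ·) = s.sort (· ≤ ·) ++ [a] := by
  refine (Finset.sortedLT_sort _).pairwise.eq_of_mem_iff ?_ fun b => by simp [or_comm]
  refine List.pairwise_append.2 ⟨(Finset.sortedLT_sort _).pairwise, by simp, ?_⟩
  simpa using h

lemma buildSet_insert_of_forall_lt (p : ℕ → ℕ) {S : Finset ℕ} {a : ℕ} (h : ∀ b ∈ S, b < a) :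
    buildSet p (insert a S) = insertAfter (p a) a (buildSet p S) := by
  rw [buildSet, Finset.sort_insert_of_forall_lt h, List.foldl_append]
  rfl

lemma eq_zero_or_mem_of_mem_buildSet {p : ℕ → ℕ} {S : Finset ℕ} {y : ℕ}
    (hy : y ∈ buildSet p S) :
    y = 0 ∨ y ∈ S := by
  induction S using Finset.induction_on_max with
  | empty => simpa [buildSet] using hy
  | insert a S ha ih =>
    rw [buildSet_insert_of_forall_lt p ha, mem_insertAfter] at hy
    rcases hy with hy | ⟨rfl, -⟩
    · exact (ih hy).imp_right Finset.mem_insert_of_mem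
    · exact Or.inr (Finset.mem_insert_self _ _)

lemma replayInsert_buildSet_of_forall_lt {p : ℕ → ℕ} {S : Finset ℕ} {x : ℕ}
    (hx : 0 < x) (h : ∀ i ∈ S, i < x) :
    replayInsert (p x) x (buildSet p S) = buildSet p (insert x S) := by
  rw [buildSet_insert_of_forall_lt p h, replayInsert_eq_insertAfter]
  intro b hb
  rcases eq_zero_or_mem_of_mem_buildSet hb with rfl | hb
  exacts [hx.le, (h b hb).le]

theorem replayInsert_buildSet {p : ℕ → ℕ} {S : Finset ℕ} {x : ℕ}
    (hpx : p x < x) (hxS : x ∉ S) (hchild : ∀ i ∈ S, p i ≠ x) :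
    replayInsert (p x) x (buildSet p S) = buildSet p (insert x S) := by
  induction S using Finset.induction_on_max with
  | empty => exact replayInsert_buildSet_of_forall_lt (by omega) (by simp)
  | insert a S ha ih =>
    have haS : a ∈ insert a S := Finset.mem_insert_self a S
    rcases (show a ≠ x from fun h => hxS (h ▸ haS)).lt_or_gt with hax | hxa
    · refine replayInsert_buildSet_of_forall_lt (by omega) ?_
      simpa using ⟨hax, fun b hb => (ha b hb).trans hax⟩
    · have ih' := ih (fun h => hxS (Finset.mem_insert_of_mem h))
        fun i hi => hchild i (Finset.mem_insert_of_mem hi)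
      have hlt : ∀ b ∈ insert x S, b < a := by simpa using ⟨hxa, ha⟩
      rw [buildSet_insert_of_forall_lt p ha,
        replayInsert_insertAfter_comm (by omega) (hchild a haS) hxa, ih',
        ← buildSet_insert_of_forall_lt p hlt, Finset.insert_comm]

theorem replay_step_general
    (k : ℕ) (p : ℕ → ℕ) (hp : ∀ i, 1 ≤ i → i ≤ k → p i < i)
    (S : Finset ℕ)
    (hclosed : ∀ i ∈ S, p i = 0 ∨ p i ∈ S)
    (x : ℕ) (hx : x ∈ Finset.Icc 1 k) (hxS : x ∉ S) :
    replayInsert (p x) x (buildSet p S) = buildSet p (insert x S) := by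
  obtain ⟨hx1, hxk⟩ := Finset.mem_Icc.mp hx
  refine replayInsert_buildSet (hp x hx1 hxk) hxS fun i hi hix => ?_
  rcases hclosed i hi with h | h
  · omega
  · exact hxS (hix ▸ h)

/-- Replay step lemma: for parent-closed `S` and an event `x ∉ S` whose parent
is already present, the timestamp-guided replay insertion produces exactly the
sequentially built list over `S ∪ {x}`. -/
theorem replay_step
    (k : ℕ) (p : ℕ → ℕ) (hp : ∀ i, 1 ≤ i → i ≤ k → p i < i)
    (S : Finset ℕ) (hS : S ⊆ Finset.Icc 1 k)
    (hclosed : ∀ i ∈ S, p i = 0 ∨ p i ∈ S)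
    (x : ℕ) (hx : x ∈ Finset.Icc 1 k) (hxS : x ∉ S)
    (hpx : p x = 0 ∨ p x ∈ S) :
    replayInsert (p x) x (buildSet p S) = buildSet p (insert x S) :=
  replay_step_general k p hp S hclosed x hx hxS
end

section
/- Adjacency–timestamp dichotomy (paper's Lemma on links A→B): Suppose that in the final list L k the element b immediately follows the element a, with b ≥ 1. Then exactly one of the following holds: (1) b > a, in which case a is an ancestor of b (b was inserted at a or at a descendant of a); or (2) b < a, in which case b was inserted before a and the parent p b of b occurs strictly before a in L k. -/
/-!
Read the list as a chain of links `a → b`. The insertion `insertAfter q x` creates the link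
`q → x`, turns a link `q → b` into `x → b`, and keeps every other link. As `x` is larger than
every element present, a link `a → b` with `a < b` can only arise as `p b → b`. A link `a → b`
with `b < a` arises when `a` is inserted after `p a` while `p a → b` is a link; since parents
precede their children, `p b` then lies at or before `p a`, hence before `a`.
-/

open List

namespace List

theorem idxOf_lt_idxOf_of_pair_sublist {α : Type*} [BEq α] [LawfulBEq α] {x y : α}
    {l : List α} (hl : l.Nodup) (h : [x, y] <+ l) : l.idxOf x < l.idxOf y := by
  induction l with
  | nil => cases h
  | cons c t ih =>
    obtain ⟨hct, ht⟩ := nodup_cons.mp hl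
    cases h with
    | cons _ h =>
      have hxc : c ≠ x := fun e => hct (e ▸ h.subset (by simp))
      have hyc : c ≠ y := fun e => hct (e ▸ h.subset (by simp))
      simpa [idxOf_cons_ne _ hxc, idxOf_cons_ne _ hyc] using ih ht h
    | cons_cons _ h =>
      have hxy : x ≠ y := fun e => hct (e ▸ h.subset (by simp))
      simp [idxOf_cons_ne _ hxy]

theorem mem_of_pair_sublist_append_cons {α : Type*} [BEq α] [LawfulBEq α] {x y : α}
    {l₁ l₂ : List α} (hl : (l₁ ++ y :: l₂).Nodup) (h : [x, y] <+ l₁ ++ y :: l₂) :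
    x ∈ l₁ := by
  by_contra hx
  have hy : y ∉ l₁ := fun hy => disjoint_of_nodup_append hl hy mem_cons_self
  have := idxOf_lt_idxOf_of_pair_sublist hl h
  rw [idxOf_append_of_notMem hx, idxOf_append_of_notMem hy, idxOf_cons_self] at this
  omega

end List

section insertAfter

variable {q x : ℕ}

theorem insertAfter_append_cons {u : List ℕ} (hu : q ∉ u) (z : List ℕ) :
    insertAfter q x (u ++ q :: z) = u ++ q :: x :: z := by
  induction u with
  | nil => simp [insertAfter]
  | cons c u ih =>
    rw [mem_cons, not_or] at hu
    simp [insertAfter, Ne.symm hu.1, ih hu.2]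

theorem sublist_insertAfter (l : List ℕ) : l <+ insertAfter q x l := by
  induction l with
  | nil => simp [insertAfter]
  | cons c t ih =>
    unfold insertAfter
    split_ifs
    · exact (sublist_cons_self x t).cons_cons c
    · exact ih.cons_cons c

theorem mem_of_mem_insertAfter {y : ℕ} {l : List ℕ} (h : y ∈ insertAfter q x l) :
    y = x ∨ y ∈ l := by
  induction l with
  | nil => simp [insertAfter] at h
  | cons c t ih =>
    unfold insertAfter at h
    split_ifs at h <;> grind

theorem nodup_insertAfter {l : List ℕ} (hl : l.Nodup) (hx : x ∉ l) :
    (insertAfter q x l).Nodup := by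
  induction l with
  | nil => simp [insertAfter]
  | cons c t ih =>
    obtain ⟨hct, ht⟩ := nodup_cons.mp hl
    rw [mem_cons, not_or] at hx
    unfold insertAfter
    split_ifs
    · simp [Ne.symm hx.1, hct, hx.2, ht]
    · refine nodup_cons.mpr ⟨fun hc => ?_, ih ht hx.2⟩
      rcases mem_of_mem_insertAfter hc with hc | hc
      exacts [hx.1 hc.symm, hct hc]

theorem pair_infix_insertAfter {l : List ℕ} (hq : q ∈ l) : [q, x] <:+: insertAfter q x l := by
  induction l with
  | nil => simp at hq
  | cons c t ih =>
    unfold insertAfter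
    split_ifs with hc
    · exact (prefix_iff_exists_eq_append.mpr ⟨t, by simp [hc]⟩).isInfix
    · exact infix_cons (ih (by simpa [Ne.symm hc] using hq))

theorem pair_infix_insertAfter_cases {a b : ℕ} {l : List ℕ}
    (h : [a, b] <:+: insertAfter q x l) :
    (a = q ∧ b = x) ∨ (a = x ∧ [q, b] <:+: l) ∨ [a, b] <:+: l := by
  induction l with
  | nil => simpa [insertAfter] using h.length_le
  | cons c t ih =>
    unfold insertAfter at h
    split_ifs at h with hc
    · rcases infix_cons_iff.mp h with h | h
      · simp_all
      rcases infix_cons_iff.mp h with h | h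
      · obtain ⟨rfl, hb⟩ := cons_prefix_cons.mp h
        exact Or.inr (Or.inl ⟨rfl, (cons_prefix_cons.mpr ⟨hc.symm, hb⟩).isInfix⟩)
      · exact Or.inr (Or.inr (infix_cons h))
    · rcases infix_cons_iff.mp h with h | h
      · obtain ⟨rfl, hb⟩ := cons_prefix_cons.mp h
        refine Or.inr (Or.inr (cons_prefix_cons.mpr ⟨rfl, ?_⟩).isInfix)
        cases t with
        | nil => simp [insertAfter] at hb
        | cons d t =>
          unfold insertAfter at hb
          split_ifs at hb <;> simpa using hb
      · rcases ih h with h | h | h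
        exacts [Or.inl h, Or.inr (Or.inl ⟨h.1, infix_cons h.2⟩),
          Or.inr (Or.inr (infix_cons h))]

end insertAfter

theorem isAncestor_parent (p : ℕ → ℕ) {j : ℕ} (hj : j ≠ 0) : isAncestor p (p j) j :=
  ⟨1, by simp [hj]⟩

section buildL

variable {p : ℕ → ℕ}

theorem le_of_mem_buildL {k x : ℕ} (h : x ∈ buildL p k) : x ≤ k := by
  induction k with
  | zero => simpa [buildL] using h
  | succ k ih =>
    rcases mem_of_mem_insertAfter h with h | h
    exacts [h.le, (ih h).trans k.le_succ]

theorem nodup_buildL (k : ℕ) : (buildL p k).Nodup := by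
  induction k with
  | zero => simp [buildL]
  | succ k ih => exact nodup_insertAfter ih fun h => by simpa using le_of_mem_buildL h

theorem mem_buildL_of_le {k : ℕ} (hp : ∀ i, 1 ≤ i → i ≤ k → p i < i) {x : ℕ}
    (hx : x ≤ k) : x ∈ buildL p k := by
  induction k generalizing x with
  | zero => simp_all [buildL]
  | succ k ih =>
    have hp' : ∀ i, 1 ≤ i → i ≤ k → p i < i := fun i h₁ h₂ => hp i h₁ (by omega)
    rcases hx.lt_or_eq with hx | rfl
    · exact (sublist_insertAfter _).subset (ih hp' (Nat.lt_succ_iff.mp hx))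
    · have hq := ih hp' (Nat.lt_succ_iff.mp (hp _ k.succ_pos le_rfl))
      exact (pair_infix_insertAfter hq).subset (by simp)

theorem parent_sublist_buildL {k : ℕ} (hp : ∀ i, 1 ≤ i → i ≤ k → p i < i) {j : ℕ}
    (hj : 1 ≤ j) (hjk : j ≤ k) : [p j, j] <+ buildL p k := by
  induction k with
  | zero => omega
  | succ k ih =>
    have hp' : ∀ i, 1 ≤ i → i ≤ k → p i < i := fun i h₁ h₂ => hp i h₁ (by omega)
    rcases hjk.lt_or_eq with hjk | rfl
    · exact (ih hp' (Nat.lt_succ_iff.mp hjk)).trans (sublist_insertAfter _)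
    · have hq := mem_buildL_of_le hp' (Nat.lt_succ_iff.mp (hp _ hj le_rfl))
      exact (pair_infix_insertAfter hq).sublist

theorem parent_eq_of_pair_infix_buildL {k a b : ℕ} (h : [a, b] <:+: buildL p k)
    (hab : a < b) : p b = a := by
  induction k with
  | zero => simpa [buildL] using h.length_le
  | succ k ih =>
    rcases pair_infix_insertAfter_cases h with ⟨rfl, rfl⟩ | ⟨rfl, hqb⟩ | h
    · rfl
    · exact absurd (le_of_mem_buildL (x := b) (hqb.subset (by simp))) (by omega)
    · exact ih h

theorem parent_sublist_of_pair_infix_buildL {k : ℕ} (hp : ∀ i, 1 ≤ i → i ≤ k → p i < i)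
    {a b : ℕ} (hb : 1 ≤ b) (h : [a, b] <:+: buildL p k) (hba : b < a) :
    [p b, a] <+ buildL p k := by
  induction k with
  | zero => simpa [buildL] using h.length_le
  | succ k ih =>
    have hp' : ∀ i, 1 ≤ i → i ≤ k → p i < i := fun i h₁ h₂ => hp i h₁ (by omega)
    rcases pair_infix_insertAfter_cases h with ⟨rfl, rfl⟩ | ⟨rfl, s, t, hst⟩ | h
    · exact absurd (hp _ hb le_rfl) (by omega)
    · set q := p (k + 1)
      have hM : buildL p k = s ++ q :: b :: t := by simp [← hst]
      have hnd : (s ++ q :: b :: t).Nodup := hM ▸ nodup_buildL k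
      have hqs : q ∉ s := fun hq => disjoint_of_nodup_append hnd hq mem_cons_self
      have hbk : b ≤ k := le_of_mem_buildL (p := p) (by simp [hM])
      have hpb : [p b, b] <+ (s ++ [q]) ++ b :: t := by
        simpa [hM] using parent_sublist_buildL hp' hb hbk
      have hpb_mem : p b ∈ s ++ [q] := mem_of_pair_sublist_append_cons (by simpa using hnd) hpb
      change [p b, k + 1] <+ insertAfter q (k + 1) (buildL p k)
      rw [hM, insertAfter_append_cons hqs, ← singleton_append (x := q), ← append_assoc]
      exact (singleton_sublist.2 hpb_mem).append (singleton_sublist.2 mem_cons_self)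
    · exact (ih hp' h).trans (sublist_insertAfter _)

end buildL

/-- Adjacency–timestamp dichotomy: if `b` (with `b ≥ 1`) immediately follows
`a` in `L k`, then exactly one of: `b > a` and `a` is an ancestor of `b`; or
`b < a` (so `b` was inserted before `a`) and the parent `p b` of `b` occurs
strictly before `a` in `L k`. -/
theorem adjacency_dichotomy
    (k : ℕ) (p : ℕ → ℕ) (hp : ∀ i, 1 ≤ i → i ≤ k → p i < i)
    (a b : ℕ) (hb : 1 ≤ b)
    (u v : List ℕ) (hL : buildL p k = u ++ a :: b :: v) :
    Xor' (a < b ∧ isAncestor p a b)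
      (b < a ∧ (buildL p k).idxOf (p b) < (buildL p k).idxOf a) := by
  have hab : [a, b] <:+: buildL p k := ⟨u, v, by simp [hL]⟩
  have hne : a ≠ b := by simpa using hab.sublist.nodup (nodup_buildL k)
  rcases hne.lt_or_gt with hlt | hgt
  · refine Or.inl ⟨⟨hlt, ?_⟩, fun h => absurd h.1 hlt.not_gt⟩
    rw [← parent_eq_of_pair_infix_buildL hab hlt]
    exact isAncestor_parent p (by omega)
  · refine Or.inr ⟨⟨hgt, ?_⟩, fun h => absurd h.1 hgt.not_gt⟩
    exact idxOf_lt_idxOf_of_pair_sublist (nodup_buildL k)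
      (parent_sublist_of_pair_infix_buildL hp hb hab hgt)
end
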